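/- arXiv:1903.08110 — 6 statements merged into one kernel-verified Lean document; each statement's English description precedes it below -/
import Mathlib

section
/- Let D > 0 and T ≥ 1. For any deterministic online learning algorithm on the domain X = [−D, D], i.e., any family of maps A_t taking a sequence of loss functions (f_1, …, f_{t−1}) on [−D, D] to a prediction x_t ∈ [−D, D], there exists a sequence of loss functions f_1, …, f_T : [−D, D] → ℝ, each 1-Lipschitz and taking values in [0, D/2], such that Σ_{t=1}^T f_t(x_t) − inf_{x ∈ [−D,D]} Σ_{t=1}^T f_t(x) ≥ DT/4, where x_t = A_t(f_1, …, f_{t−1}). In particular, no deterministic algorithm achieves o(1) average regret for online non-convex learning. -/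
/-!
The adversary answers each prediction `x_t` with the tent of height `D / 2` centred at `x_t`,
so the learner pays `D / 2` in every round. A tent of half-width `D / 2` cannot charge both
`-D / 2` and `D / 2`, so the cumulative losses at these two points add up to at most `DT / 2`
and the smaller one is at most `DT / 4`.
-/

open Finset Set

noncomputable section

def bump (r a x : ℝ) : ℝ := max 0 (r - |x - a|)

section Bump

variable {r : ℝ}

lemma bump_nonneg (r a x : ℝ) : 0 ≤ bump r a x := le_max_left _ _

lemma bump_le (hr : 0 ≤ r) (a x : ℝ) : bump r a x ≤ r :=
  max_le hr (sub_le_self _ (abs_nonneg _))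

lemma bump_self (hr : 0 ≤ r) (a : ℝ) : bump r a a = r := by
  simp [bump, hr]

lemma abs_bump_sub_bump_le (r a x y : ℝ) : |bump r a x - bump r a y| ≤ |x - y| :=
  calc |bump r a x - bump r a y|
      ≤ |(r - |x - a|) - (r - |y - a|)| := by
        rw [bump, bump, max_comm 0, max_comm 0]
        exact abs_max_sub_max_le_abs _ _ 0
    _ = |(|y - a|) - (|x - a|)| := by ring_nf
    _ ≤ |(y - a) - (x - a)| := abs_abs_sub_abs_le_abs_sub _ _
    _ = |x - y| := by rw [abs_sub_comm]; ring_nf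

lemma bump_add_bump_le (hr : 0 ≤ r) (a : ℝ) {x y : ℝ} (hxy : 2 * r ≤ |x - y|) :
    bump r a x + bump r a y ≤ r := by
  have htri : |x - y| ≤ |x - a| + |y - a| := abs_sub_comm a y ▸ abs_sub_le x a y
  have := abs_nonneg (x - a)
  have := abs_nonneg (y - a)
  unfold bump
  rcases max_cases 0 (r - |x - a|) with ⟨hx, -⟩ | ⟨hx, -⟩ <;>
    rcases max_cases 0 (r - |y - a|) with ⟨hy, -⟩ | ⟨hy, -⟩ <;> linarith

lemma sInf_sum_bump_le (hr : 0 ≤ r) (c : ℕ → ℝ) (T : ℕ) {s : Set ℝ} (hneg : -r ∈ s)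
    (hpos : r ∈ s) :
    sInf ((fun x => ∑ t ∈ range T, bump r (c t) x) '' s) ≤ T * r / 2 := by
  set L := fun x => ∑ t ∈ range T, bump r (c t) x
  have hbdd : BddBelow (L '' s) := ⟨0, by
    rintro _ ⟨x, -, rfl⟩
    exact sum_nonneg fun t _ => bump_nonneg _ _ _⟩
  have hsum : L (-r) + L r ≤ T * r :=
    calc L (-r) + L r = ∑ t ∈ range T, (bump r (c t) (-r) + bump r (c t) r) :=
          (sum_add_distrib).symm
      _ ≤ ∑ _t ∈ range T, r :=
          sum_le_sum fun t _ => bump_add_bump_le hr _ (by rw [abs_of_nonpos] <;> linarith)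
      _ = T * r := by simp
  have hle_neg := csInf_le hbdd (mem_image_of_mem L hneg)
  have hle_pos := csInf_le hbdd (mem_image_of_mem L hpos)
  linarith

end Bump

/-- The prediction `x_t` of the learner `A` when the adversary has answered every earlier
prediction `x_i` with the loss `bump r x_i`. -/
def prediction (r : ℝ) (A : (t : ℕ) → (Fin t → ℝ → ℝ) → ℝ) : ℕ → ℝ
  | t => A t fun i => bump r (prediction r A i)
decreasing_by exact i.2

lemma prediction_eq (r : ℝ) (A : (t : ℕ) → (Fin t → ℝ → ℝ) → ℝ) (t : ℕ) :
    prediction r A t = A t fun i => bump r (prediction r A i) := by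
  rw [prediction]

theorem no_deterministic_algorithm_general (D : ℝ) (hD : 0 < D) (T : ℕ)
    (A : (t : ℕ) → (Fin t → ℝ → ℝ) → ℝ) :
    ∃ f : ℕ → ℝ → ℝ,
      (∀ t < T, ∀ x ∈ Set.Icc (-D) D, ∀ y ∈ Set.Icc (-D) D,
        |f t x - f t y| ≤ 1 * |x - y|) ∧
      (∀ t < T, ∀ x ∈ Set.Icc (-D) D, f t x ∈ Set.Icc 0 (D / 2)) ∧
      (∑ t ∈ Finset.range T, f t (A t (fun i => f i.1))) -
          sInf ((fun x => ∑ t ∈ Finset.range T, f t x) '' Set.Icc (-D) D) ≥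
        D * T / 4 := by
  have hr : 0 ≤ D / 2 := by positivity
  refine ⟨fun t => bump (D / 2) (prediction (D / 2) A t), fun t _ x _ y _ => ?_,
    fun t _ x _ => ⟨bump_nonneg _ _ _, bump_le hr _ _⟩, ?_⟩
  · rw [one_mul]
    exact abs_bump_sub_bump_le _ _ _ _
  · have hlearner : ∑ t ∈ range T, bump (D / 2) (prediction (D / 2) A t)
        (A t fun i => bump (D / 2) (prediction (D / 2) A i)) = T * (D / 2) := by
      simp only [← prediction_eq, bump_self hr, sum_const, card_range, nsmul_eq_mul]
    have hbest := sInf_sum_bump_le hr (prediction (D / 2) A) T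
      (s := Icc (-D) D) ⟨by linarith, by linarith⟩ ⟨by linarith, by linarith⟩
    linarith

/-- **No deterministic algorithm achieves vanishing regret (Proposition 1).**
A deterministic online learning algorithm on `X = [-D, D]` is a family of maps
`A t : (Fin t → ℝ → ℝ) → ℝ` taking the previously observed losses `f_0, …, f_{t-1}`
to a prediction in `[-D, D]`. For any such algorithm there is a sequence of loss
functions on `[-D, D]`, each `1`-Lipschitz with values in `[0, D/2]`, forcing
regret at least `DT/4`. -/
theorem no_deterministic_algorithm (D : ℝ) (hD : 0 < D) (T : ℕ) (hT : 1 ≤ T)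
    (A : (t : ℕ) → (Fin t → ℝ → ℝ) → ℝ)
    (hA : ∀ (t : ℕ) (fs : Fin t → ℝ → ℝ), A t fs ∈ Set.Icc (-D) D) :
    ∃ f : ℕ → ℝ → ℝ,
      (∀ t < T, ∀ x ∈ Set.Icc (-D) D, ∀ y ∈ Set.Icc (-D) D,
        |f t x - f t y| ≤ 1 * |x - y|) ∧
      (∀ t < T, ∀ x ∈ Set.Icc (-D) D, f t x ∈ Set.Icc 0 (D / 2)) ∧
      (∑ t ∈ Finset.range T, f t (A t (fun i => f i.1))) -
          sInf ((fun x => ∑ t ∈ Finset.range T, f t x) '' Set.Icc (-D) D) ≥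
        D * T / 4 :=
  no_deterministic_algorithm_general D hD T A
end
end

section
/- Let d ≥ 1, T ≥ 1, let X ⊆ ℝ^d be nonempty with ℓ∞-diameter at most D, let α, β ≥ 0, η > 0, L ≥ 0, and let f_1, …, f_T : X → ℝ each be L-Lipschitz with respect to the ℓ1 norm. Let μ_η be the product probability measure on ℝ^d whose coordinates are i.i.d. exponential with parameter η. Suppose x_1, …, x_{T+1} : ℝ^d → X are measurable maps such that for μ_η-almost every σ and every t ∈ {1, …, T+1}, x_t(σ) is an (α,β)-approximate minimizer over X of x ↦ Σ_{i=1}^{t−1} f_i(x) − ⟨σ, x⟩. Then E_{σ∼μ_η}[ Σ_{t=1}^T f_t(x_t(σ)) − inf_{x∈X} Σ_{t=1}^T f_t(x) ] ≤ L Σ_{t=1}^T E_{σ∼μ_η}[ ‖x_t(σ) − x_{t+1}(σ)‖_1 ] + d(βT + D)/η + αT. -/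
open MeasureTheory

noncomputable section

/-- The exponential distribution with rate `η`: density `η * exp (-η x)` on `[0, ∞)`,
so that `P (Z ≥ s) = exp (-η s)` for `s ≥ 0`. -/
def expoMeasure (η : ℝ) : Measure ℝ :=
  volume.withDensity fun x => ENNReal.ofReal (if 0 ≤ x then η * Real.exp (-(η * x)) else 0)

instance (η : ℝ) : SigmaFinite (expoMeasure η) := by
  unfold expoMeasure; infer_instance

/-- The product probability measure on `ℝ^d` whose coordinates are i.i.d. `Exp(η)`. -/
def expoProd (d : ℕ) (η : ℝ) : Measure (Fin d → ℝ) :=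
  Measure.pi fun _ => expoMeasure η

/-- Standard inner product on `ℝ^d`. -/
def dotp {d : ℕ} (σ x : Fin d → ℝ) : ℝ := ∑ i, σ i * x i

/-- ℓ1 norm on `ℝ^d`. -/
def l1 {d : ℕ} (x : Fin d → ℝ) : ℝ := ∑ i, |x i|

/-! ### Auxiliary lemmas about the exponential measure -/

section Aux

open Real Set

lemma l1_nonneg {d : ℕ} (v : Fin d → ℝ) : 0 ≤ l1 v :=
  Finset.sum_nonneg fun _ _ => abs_nonneg _

lemma expoMeasure_eq' (η : ℝ) : expoMeasure η = ProbabilityTheory.expMeasure η := by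
  unfold expoMeasure
  rw [ProbabilityTheory.expMeasure, ProbabilityTheory.gammaMeasure]
  congr 1
  funext xx
  rw [show ProbabilityTheory.gammaPDF 1 η xx = ProbabilityTheory.exponentialPDF η xx from rfl,
    ProbabilityTheory.exponentialPDF_eq]

lemma expoMeasure_prob {η : ℝ} (hη : 0 < η) : IsProbabilityMeasure (expoMeasure η) := by
  rw [expoMeasure_eq']; exact ProbabilityTheory.isProbabilityMeasure_expMeasure hη

lemma expoMeasure_int (η : ℝ) (hη : 0 < η) (g : ℝ → ℝ) :
    ∫ y, g y ∂(expoMeasure η)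
      = ∫ y, (if 0 ≤ y then η * Real.exp (-(η * y)) else 0) * g y := by
  have hm : Measurable fun y => Real.toNNReal (if 0 ≤ y then η * Real.exp (-(η * y)) else 0) := by
    apply Measurable.real_toNNReal
    exact Measurable.ite measurableSet_Ici (by fun_prop) measurable_const
  have : expoMeasure η
      = volume.withDensity fun y => ((Real.toNNReal (if 0 ≤ y then η * Real.exp (-(η * y)) else 0) : NNReal) : ENNReal) := by
    unfold expoMeasure
    rfl
  rw [this, integral_withDensity_eq_integral_smul hm]
  congr 1
  funext y
  rw [NNReal.smul_def, Real.coe_toNNReal]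
  · rfl
  · split <;> positivity

lemma density_eventually_eq (η : ℝ) :
    (fun y => (if 0 ≤ y then η * Real.exp (-(η * y)) else 0) * y)
      =ᵐ[volume] (Ioi (0:ℝ)).indicator (fun y => y ^ (2-1 : ℝ) * Real.exp (-(η * y)) * η) := by
  filter_upwards [compl_mem_ae_iff.2 (volume_singleton (a := (0:ℝ)))] with y hy
  rcases lt_trichotomy y 0 with h | h | h
  · simp [not_le.2 h, indicator_of_notMem (by simpa using h.le : y ∉ Ioi 0)]
  · exact absurd h hy
  · rw [if_pos h.le, indicator_of_mem (mem_Ioi.2 h)]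
    rw [show (2-1:ℝ) = 1 by norm_num, Real.rpow_one]
    ring

lemma expoMeasure_mean (η : ℝ) (hη : 0 < η) : ∫ y, y ∂(expoMeasure η) = 1 / η := by
  rw [expoMeasure_int η hη]
  rw [integral_congr_ae (density_eventually_eq η), integral_indicator measurableSet_Ioi]
  have := integral_rpow_mul_exp_neg_mul_Ioi (a := 2) (r := η) (by norm_num) hη
  rw [show ∫ y in Ioi (0:ℝ), y ^ (2-1:ℝ) * Real.exp (-(η * y)) * η
      = (∫ y in Ioi (0:ℝ), y ^ (2-1:ℝ) * Real.exp (-(η * y))) * η by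
    rw [← integral_mul_const], this]
  have h2 : Real.Gamma 2 = 1 := by
    rw [show (2:ℝ) = 1 + 1 by norm_num, Real.Gamma_add_one one_ne_zero, Real.Gamma_one, mul_one]
  rw [h2]
  field_simp [hη.ne']
  simp only [Real.rpow_two, div_pow, one_pow]
  field_simp

lemma expoMeasure_integrable_id (η : ℝ) (hη : 0 < η) :
    Integrable (fun y => y) (expoMeasure η) := by
  have hm : Measurable fun y => Real.toNNReal (if 0 ≤ y then η * Real.exp (-(η * y)) else 0) := by
    apply Measurable.real_toNNReal
    exact Measurable.ite measurableSet_Ici (by fun_prop) measurable_const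
  have hrw : expoMeasure η
      = volume.withDensity fun y => ((Real.toNNReal (if 0 ≤ y then η * Real.exp (-(η * y)) else 0) : NNReal) : ENNReal) := by
    unfold expoMeasure
    rfl
  rw [hrw, integrable_withDensity_iff_integrable_smul hm]
  have heq : (fun y => (Real.toNNReal (if 0 ≤ y then η * Real.exp (-(η * y)) else 0)) • y)
      = fun y => (if 0 ≤ y then η * Real.exp (-(η * y)) else 0) * y := by
    funext y
    rw [NNReal.smul_def, Real.coe_toNNReal]
    · rfl
    · split <;> positivity
  rw [heq]
  apply Integrable.congr _ (density_eventually_eq η).symm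
  rw [integrable_indicator_iff measurableSet_Ioi]
  have h1 : IntegrableOn (fun y : ℝ => y ^ (1:ℝ) * Real.exp (-η * y ^ (1:ℝ))) (Ioi 0) volume :=
    integrableOn_rpow_mul_exp_neg_mul_rpow (by norm_num) zero_lt_one hη
  have h2 : IntegrableOn (fun y : ℝ => y ^ (2-1:ℝ) * Real.exp (-(η * y))) (Ioi 0) volume := by
    apply h1.congr_fun _ measurableSet_Ioi
    intro y hy
    simp only [Real.rpow_one, show (2-1:ℝ) = 1 by norm_num, neg_mul]
  exact h2.mul_const η

lemma expoMeasure_ae_nonneg (η : ℝ) : ∀ᵐ y ∂(expoMeasure η), 0 ≤ y := by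
  rw [ae_iff]
  have : {y : ℝ | ¬ 0 ≤ y} = Iio 0 := by ext y; exact not_le
  rw [this]
  unfold expoMeasure
  rw [withDensity_apply _ measurableSet_Iio]
  rw [show (0:ENNReal) = ∫⁻ _ in Iio (0:ℝ), 0 ∂volume by rw [lintegral_zero]]
  apply setLIntegral_congr_fun measurableSet_Iio
  unfold EqOn
  intro y hy
  beta_reduce
  rw [if_neg (not_le.2 hy), ENNReal.ofReal_zero]

lemma expoProd_prob (d : ℕ) {η : ℝ} (hη : 0 < η) : IsProbabilityMeasure (expoProd d η) := by
  haveI : ∀ i : Fin d, IsProbabilityMeasure (expoMeasure η) := fun _ => expoMeasure_prob hη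
  unfold expoProd
  infer_instance

lemma expoProd_map_eval (d : ℕ) {η : ℝ} (hη : 0 < η) (i : Fin d) :
    (expoProd d η).map (Function.eval i) = expoMeasure η := by
  haveI : IsProbabilityMeasure (expoMeasure η) := expoMeasure_prob hη
  apply Measure.ext
  intro s hs
  rw [Measure.map_apply (measurable_pi_apply i) hs]
  have hpre : (fun σ : Fin d → ℝ => σ i) ⁻¹' s
      = Set.pi Set.univ (Function.update (fun _ => Set.univ) i s) := Set.eval_preimage
  rw [show ((fun f : Fin d → ℝ => f i) ⁻¹' s) = Set.pi Set.univ (Function.update (fun _ => Set.univ) i s) from hpre]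
  rw [expoProd, Measure.pi_pi]
  rw [Finset.prod_eq_single i]
  · rw [Function.update_self]
  · intro j _ hj
    rw [Function.update_of_ne hj]
    exact measure_univ
  · intro h
    exact absurd (Finset.mem_univ i) h

lemma expoProd_eval_nonneg (d : ℕ) {η : ℝ} (hη : 0 < η) :
    ∀ᵐ σ ∂(expoProd d η), ∀ i, 0 ≤ σ i := by
  rw [MeasureTheory.ae_all_iff]
  intro i
  have hm : AEMeasurable (fun σ : Fin d → ℝ => σ i) (expoProd d η) :=
    (measurable_pi_apply i).aemeasurable
  refine (MeasureTheory.ae_map_iff (p := fun y : ℝ => 0 ≤ y) hm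
    (by exact measurableSet_le measurable_const measurable_id)).mp ?_
  rw [expoProd_map_eval d hη i]
  exact expoMeasure_ae_nonneg η

lemma expoProd_integrable_eval (d : ℕ) {η : ℝ} (hη : 0 < η) (i : Fin d) :
    Integrable (fun σ : Fin d → ℝ => σ i) (expoProd d η) := by
  have h := expoMeasure_integrable_id η hη
  rw [← expoProd_map_eval d hη i] at h
  exact (integrable_map_measure aestronglyMeasurable_id
    (measurable_pi_apply i).aemeasurable).mp h

lemma expoProd_integral_eval (d : ℕ) {η : ℝ} (hη : 0 < η) (i : Fin d) :
    ∫ σ, σ i ∂(expoProd d η) = 1 / η := by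
  rw [← expoMeasure_mean η hη, ← expoProd_map_eval d hη i]
  exact (integral_map (μ := expoProd d η) (φ := fun σ => σ i) (f := fun y : ℝ => y)
    (measurable_pi_apply i).aemeasurable aestronglyMeasurable_id).symm

lemma expoProd_integrable_abs_eval (d : ℕ) {η : ℝ} (hη : 0 < η) (i : Fin d) :
    Integrable (fun σ : Fin d → ℝ => |σ i|) (expoProd d η) :=
  (expoProd_integrable_eval d hη i).abs

lemma expoProd_integrable_l1 (d : ℕ) {η : ℝ} (hη : 0 < η) :
    Integrable (fun σ : Fin d → ℝ => l1 σ) (expoProd d η) := by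
  unfold l1
  exact integrable_finset_sum _ (fun i _ => expoProd_integrable_abs_eval d hη i)

lemma expoProd_integral_l1 (d : ℕ) {η : ℝ} (hη : 0 < η) :
    ∫ σ, l1 σ ∂(expoProd d η) = d / η := by
  unfold l1
  rw [integral_finset_sum _ (fun i _ => expoProd_integrable_abs_eval d hη i)]
  have : ∀ i : Fin d, ∫ σ, |σ i| ∂(expoProd d η) = 1 / η := by
    intro i
    rw [← expoProd_integral_eval d hη i]
    apply integral_congr_ae
    filter_upwards [expoProd_eval_nonneg d hη] with σ hσ
    exact abs_of_nonneg (hσ i)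
  rw [Finset.sum_congr rfl (fun i _ => this i), Finset.sum_const, Finset.card_univ,
    Fintype.card_fin, nsmul_eq_mul]
  ring

/-- Deterministic be-the-leader argument. -/
lemma btl_core {d T : ℕ} (hT : 1 ≤ T) {X : Set (Fin d → ℝ)} {D α β L : ℝ}
    (hdiam : ∀ x ∈ X, ∀ y ∈ X, ∀ i, |x i - y i| ≤ D)
    (f : ℕ → (Fin d → ℝ) → ℝ)
    (hf : ∀ t < T, ∀ x ∈ X, ∀ y ∈ X, |f t x - f t y| ≤ L * l1 (x - y))
    (σ : Fin d → ℝ) (z : ℕ → Fin d → ℝ)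
    (hz : ∀ t < T + 1, z t ∈ X)
    (hopt : ∀ t < T + 1, ∀ y ∈ X,
      (∑ i ∈ Finset.range t, f i (z t)) - dotp σ (z t) ≤
        (∑ i ∈ Finset.range t, f i y) - dotp σ y + (α + β * l1 σ)) :
    ∀ y ∈ X, ∑ t ∈ Finset.range T, f t (z t) ≤
      (∑ t ∈ Finset.range T, f t y) + L * (∑ t ∈ Finset.range T, l1 (z t - z (t+1)))
        + D * l1 σ + T * (α + β * l1 σ) := by
  set ε := α + β * l1 σ with hε
  have hdot : ∀ a ∈ X, ∀ b ∈ X, dotp σ a - dotp σ b ≤ D * l1 σ := by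
    intro a ha b hb
    rw [dotp, dotp, ← Finset.sum_sub_distrib]
    have : ∀ i ∈ Finset.univ, σ i * a i - σ i * b i ≤ |σ i| * D := by
      intro i _
      calc σ i * a i - σ i * b i = σ i * (a i - b i) := by ring
        _ ≤ |σ i * (a i - b i)| := le_abs_self _
        _ = |σ i| * |a i - b i| := abs_mul _ _
        _ ≤ |σ i| * D := by
            exact mul_le_mul_of_nonneg_left (hdiam a ha b hb i) (abs_nonneg _)
    calc ∑ i, (σ i * a i - σ i * b i) ≤ ∑ i, |σ i| * D := Finset.sum_le_sum this
      _ = D * l1 σ := by rw [l1, Finset.mul_sum]; exact Finset.sum_congr rfl fun i _ => mul_comm _ _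
  have key : ∀ n, n + 1 ≤ T → ∑ t ∈ Finset.range (n+1), f t (z (t+1)) ≤
      ((∑ t ∈ Finset.range (n+1), f t (z (n+1))) - dotp σ (z (n+1))) + dotp σ (z 1) + n * ε := by
    intro n
    induction n with
    | zero =>
      intro _
      simp only [zero_add, Finset.sum_range_one, Nat.cast_zero, zero_mul]
      linarith
    | succ n ih =>
      intro hn1
      have ihh := ih (by omega)
      have hopt' := hopt (n+1) (by omega) (z (n+1+1)) (hz (n+1+1) (by omega))
      rw [Finset.sum_range_succ]
      rw [Finset.sum_range_succ (f := fun t => f t (z (n+1+1)))]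
      push_cast
      push_cast at ihh
      linarith
  intro y hy
  obtain ⟨m, rfl⟩ : ∃ m, T = m + 1 := ⟨T - 1, by omega⟩
  have hk := key m (by omega)
  have hoptT := hopt (m+1) (by omega) y hy
  have hd1 := hdot (z 1) (hz 1 (by omega)) y hy
  have lip : (∑ t ∈ Finset.range (m+1), f t (z t)) - ∑ t ∈ Finset.range (m+1), f t (z (t+1)) ≤
      L * ∑ t ∈ Finset.range (m+1), l1 (z t - z (t+1)) := by
    rw [← Finset.sum_sub_distrib, Finset.mul_sum]
    apply Finset.sum_le_sum
    intro t ht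
    have htm := Finset.mem_range.mp ht
    have h1 := hf t htm (z t) (hz t (by omega)) (z (t+1)) (hz (t+1) (by omega))
    have h2 := le_abs_self (f t (z t) - f t (z (t+1)))
    linarith
  push_cast
  push_cast at hk
  linarith

end Aux

/-- **Lemma 1 (regret-to-stability for FTPL).** Rounds are indexed `0, …, T-1`, and
predictions `x 0, …, x T` (i.e. `x_1, …, x_{T+1}` in 1-based notation) are
`(α,β)`-approximate minimizers of the perturbed cumulative losses. The expected regret
is bounded by `L` times the total expected stability `∑ₜ E‖x t - x (t+1)‖₁` plus
`d(βT + D)/η + αT`. -/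
theorem ftpl_regret_le_stability (d T : ℕ) (hd : 1 ≤ d) (hT : 1 ≤ T)
    (X : Set (Fin d → ℝ)) (hX : X.Nonempty)
    (D : ℝ) (hdiam : ∀ x ∈ X, ∀ y ∈ X, ∀ i, |x i - y i| ≤ D)
    (α β η L : ℝ) (hα : 0 ≤ α) (hβ : 0 ≤ β) (hη : 0 < η) (hL : 0 ≤ L)
    (f : ℕ → (Fin d → ℝ) → ℝ)
    (hf : ∀ t < T, ∀ x ∈ X, ∀ y ∈ X, |f t x - f t y| ≤ L * l1 (x - y))
    (x : ℕ → (Fin d → ℝ) → (Fin d → ℝ))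
    (hmeas : ∀ t < T + 1, Measurable (x t))
    (hmin : ∀ᵐ σ ∂(expoProd d η), ∀ t < T + 1, x t σ ∈ X ∧
      ∀ y ∈ X,
        (∑ i ∈ Finset.range t, f i (x t σ)) - dotp σ (x t σ) ≤
          (∑ i ∈ Finset.range t, f i y) - dotp σ y + (α + β * l1 σ)) :
    (∫ σ, ((∑ t ∈ Finset.range T, f t (x t σ)) -
          sInf ((fun y => ∑ t ∈ Finset.range T, f t y) '' X)) ∂(expoProd d η)) ≤
      L * (∑ t ∈ Finset.range T, ∫ σ, l1 (x t σ - x (t + 1) σ) ∂(expoProd d η)) +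
        d * (β * T + D) / η + α * T := by
  haveI hP : IsProbabilityMeasure (expoProd d η) := expoProd_prob d hη
  obtain ⟨x₀, hx₀⟩ := hX
  have hD : 0 ≤ D := by
    have := hdiam x₀ hx₀ x₀ hx₀ ⟨0, hd⟩
    simpa using this
  have hl1X : ∀ a ∈ X, ∀ b ∈ X, l1 (a - b) ≤ d * D := by
    intro a ha b hb
    rw [l1]
    calc ∑ i, |(a - b) i| ≤ ∑ _i : Fin d, D :=
          Finset.sum_le_sum fun i _ => by rw [Pi.sub_apply]; exact hdiam a ha b hb i
      _ = d * D := by rw [Finset.sum_const, Finset.card_univ, Fintype.card_fin, nsmul_eq_mul]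
  have hne : ((fun y => ∑ t ∈ Finset.range T, f t y) '' X).Nonempty := ⟨_, ⟨x₀, hx₀, rfl⟩⟩
  -- measurability and integrability of the stability terms
  have hmeasl1 : ∀ t < T, Measurable (fun σ => l1 (x t σ - x (t+1) σ)) := by
    intro t ht
    unfold l1
    apply Finset.measurable_sum
    intro i _
    exact (((measurable_pi_apply i).comp (hmeas t (by omega))).sub
      ((measurable_pi_apply i).comp (hmeas (t+1) (by omega)))).abs
  have hintl1 : ∀ t < T, Integrable (fun σ => l1 (x t σ - x (t+1) σ)) (expoProd d η) := by
    intro t ht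
    apply Integrable.mono' (integrable_const (d * D)) (hmeasl1 t ht).aestronglyMeasurable
    filter_upwards [hmin] with σ hσ
    have h1 := (hσ t (by omega)).1
    have h2 := (hσ (t+1) (by omega)).1
    rw [Real.norm_eq_abs, abs_of_nonneg (l1_nonneg _)]
    exact hl1X _ h1 _ h2
  set g : (Fin d → ℝ) → ℝ := fun σ =>
    L * (∑ t ∈ Finset.range T, l1 (x t σ - x (t+1) σ)) +
      ((D + T * β) * l1 σ + T * α) with hgdef
  have hint_sum : Integrable (fun σ => ∑ t ∈ Finset.range T, l1 (x t σ - x (t+1) σ))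
      (expoProd d η) :=
    integrable_finset_sum _ (fun t ht => hintl1 t (Finset.mem_range.mp ht))
  have hint2 : Integrable (fun σ => (D + T * β) * l1 σ + T * α) (expoProd d η) :=
    (((expoProd_integrable_l1 d hη).const_mul (D + T*β)).add (integrable_const _))
  have hintg : Integrable g (expoProd d η) := (hint_sum.const_mul L).add hint2
  have hgint : ∫ σ, g σ ∂(expoProd d η) =
      L * (∑ t ∈ Finset.range T, ∫ σ, l1 (x t σ - x (t+1) σ) ∂(expoProd d η)) +
        ((D + T*β) * (d/η) + T*α) := by
    rw [hgdef]
    rw [integral_add (hint_sum.const_mul L) hint2]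
    rw [integral_add ((expoProd_integrable_l1 d hη).const_mul (D + T*β)) (integrable_const _)]
    rw [integral_const_mul, integral_const_mul,
      integral_finset_sum _ (fun t ht => hintl1 t (Finset.mem_range.mp ht)),
      expoProd_integral_l1 d hη, integral_const]
    simp [measure_univ]
  have hae : ∀ᵐ σ ∂(expoProd d η),
      ((∑ t ∈ Finset.range T, f t (x t σ)) -
        sInf ((fun y => ∑ t ∈ Finset.range T, f t y) '' X)) ≤ g σ := by
    filter_upwards [hmin] with σ hσ
    have hz : ∀ t < T + 1, x t σ ∈ X := fun t ht => (hσ t ht).1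
    have hopt : ∀ t < T + 1, ∀ y ∈ X,
        (∑ i ∈ Finset.range t, f i (x t σ)) - dotp σ (x t σ) ≤
          (∑ i ∈ Finset.range t, f i y) - dotp σ y + (α + β * l1 σ) :=
      fun t ht => (hσ t ht).2
    have hb := btl_core hT hdiam f hf σ (fun t => x t σ) hz hopt
    have hlow : (∑ t ∈ Finset.range T, f t (x t σ)) - g σ ≤
        sInf ((fun y => ∑ t ∈ Finset.range T, f t y) '' X) := by
      apply le_csInf hne
      rintro b ⟨y, hy, rfl⟩
      have hby := hb y hy
      have hexp : D * l1 σ + (T:ℝ) * (α + β * l1 σ) = (D + (T:ℝ)*β) * l1 σ + (T:ℝ)*α := by ring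
      rw [hgdef]
      simp only
      linarith
    linarith
  by_cases hI : Integrable (fun σ => (∑ t ∈ Finset.range T, f t (x t σ)) -
      sInf ((fun y => ∑ t ∈ Finset.range T, f t y) '' X)) (expoProd d η)
  · have h1 := integral_mono_ae hI hintg hae
    rw [hgint] at h1
    have heq : (D + (T:ℝ)*β) * ((d:ℝ)/η) + (T:ℝ)*α = (d:ℝ) * (β*(T:ℝ) + D)/η + α*(T:ℝ) := by
      field_simp
      ring
    linarith
  · rw [integral_undef hI]
    have h0 : 0 ≤ L * (∑ t ∈ Finset.range T, ∫ σ, l1 (x t σ - x (t+1) σ) ∂(expoProd d η)) :=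
      mul_nonneg hL (Finset.sum_nonneg fun t _ => integral_nonneg (fun σ => l1_nonneg _))
    have h1 : 0 ≤ (d:ℝ) * (β*(T:ℝ) + D)/η :=
      div_nonneg (mul_nonneg (Nat.cast_nonneg d)
        (add_nonneg (mul_nonneg hβ (Nat.cast_nonneg T)) hD)) hη.le
    have h2 : 0 ≤ α*(T:ℝ) := mul_nonneg hα (Nat.cast_nonneg T)
    linarith
end
end

section
/- Let X ⊆ ℝ^d, let h : X → ℝ, let α, β ≥ 0, let σ ∈ ℝ^d, c > 0, i ∈ {1, …, d}, and set σ' = σ + c e_i where e_i is the i-th standard basis vector. Suppose x ∈ X satisfies h(x) − ⟨σ, x⟩ ≤ inf_{z∈X} (h(z) − ⟨σ, z⟩) + α + β‖σ‖_1, and x' ∈ X satisfies h(x') − ⟨σ', x'⟩ ≤ inf_{z∈X} (h(z) − ⟨σ', z⟩) + α + β‖σ'‖_1. Then the i-th coordinates satisfy x'_i ≥ x_i − 2(α + β‖σ‖_1)/c − β. -/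
open MeasureTheory

noncomputable section

/-- The `i`-th standard basis vector of `ℝ^d`. -/
def stdBasis {d : ℕ} (i : Fin d) : Fin d → ℝ := Pi.single i 1

/-! Testing each approximate-optimality inequality at the other point and adding them cancels
`h - ⟨σ, ·⟩`, leaving `c (xᵢ - x'ᵢ) ≤ 2(α + β‖σ‖₁) + β (‖σ + c eᵢ‖₁ - ‖σ‖₁)`; the triangle inequality
bounds the last difference by `c`. -/

def IsApproxMinOn {E : Type*} (f : E → ℝ) (X : Set E) (ε : ℝ) (x : E) : Prop :=
  ∀ z ∈ X, f x ≤ f z + ε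

theorem IsApproxMinOn.le_add_of_add {E : Type*} {f g : E → ℝ} {X : Set E} {ε ε' : ℝ}
    {x x' : E} (hx : IsApproxMinOn f X ε x) (hx' : IsApproxMinOn (fun z => f z + g z) X ε' x')
    (hxX : x ∈ X) (hx'X : x' ∈ X) : g x' ≤ g x + (ε + ε') := by
  have h₁ := hx x' hx'X
  have h₂ := hx' x hxX
  dsimp only at h₂
  linarith

section

variable {d : ℕ}

theorem dotp_add_left (σ τ x : Fin d → ℝ) : dotp (σ + τ) x = dotp σ x + dotp τ x := by
  simp [dotp, add_mul, Finset.sum_add_distrib]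

theorem dotp_smul_left (c : ℝ) (σ x : Fin d → ℝ) : dotp (c • σ) x = c * dotp σ x := by
  simp [dotp, Finset.mul_sum, mul_assoc]

theorem dotp_stdBasis_left (i : Fin d) (x : Fin d → ℝ) : dotp (stdBasis i) x = x i := by
  simp [dotp, stdBasis, Pi.single_apply]

theorem l1_add_le (x y : Fin d → ℝ) : l1 (x + y) ≤ l1 x + l1 y := by
  rw [l1, l1, l1, ← Finset.sum_add_distrib]
  exact Finset.sum_le_sum fun j _ => abs_add_le (x j) (y j)

theorem l1_smul (c : ℝ) (x : Fin d → ℝ) : l1 (c • x) = |c| * l1 x := by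
  simp [l1, abs_mul, Finset.mul_sum]

theorem l1_stdBasis (i : Fin d) : l1 (stdBasis i) = 1 := by
  simp [l1, stdBasis, Pi.single_apply, apply_ite]

theorem l1_add_smul_stdBasis_le (σ : Fin d → ℝ) (c : ℝ) (i : Fin d) :
    l1 (σ + c • stdBasis i) ≤ l1 σ + |c| := by
  simpa [l1_smul, l1_stdBasis] using l1_add_le σ (c • stdBasis i)

end

theorem ftpl_monotonicity_one_general {d : ℕ} (X : Set (Fin d → ℝ)) (h : (Fin d → ℝ) → ℝ)
    (α β : ℝ) (hβ : 0 ≤ β)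
    (σ : Fin d → ℝ) (c : ℝ) (hc : 0 < c) (i : Fin d)
    (x x' : Fin d → ℝ) (hxX : x ∈ X) (hx'X : x' ∈ X)
    (hx : ∀ z ∈ X, h x - dotp σ x ≤ h z - dotp σ z + (α + β * l1 σ))
    (hx' : ∀ z ∈ X,
      h x' - dotp (σ + c • stdBasis i) x' ≤
        h z - dotp (σ + c • stdBasis i) z + (α + β * l1 (σ + c • stdBasis i))) :
    x' i ≥ x i - 2 * (α + β * l1 σ) / c - β := by
  have hx'_split : IsApproxMinOn (fun z => (h z - dotp σ z) + -(c * z i)) X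
      (α + β * l1 (σ + c • stdBasis i)) x' := fun z hz => by
    have := hx' z hz
    simp only [dotp_add_left, dotp_smul_left, dotp_stdBasis_left] at this
    linarith
  have hgap := IsApproxMinOn.le_add_of_add (f := fun z => h z - dotp σ z) hx hx'_split hxX hx'X
  have hl1 : β * l1 (σ + c • stdBasis i) ≤ β * (l1 σ + c) := by
    simpa [abs_of_pos hc] using
      mul_le_mul_of_nonneg_left (l1_add_smul_stdBasis_le σ c i) hβ
  have hc_gap : c * (x i - x' i) ≤ 2 * (α + β * l1 σ) + β * c := by linarith
  have hgap_div : x i - x' i ≤ 2 * (α + β * l1 σ) / c + β := by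
    rw [div_add' _ _ _ hc.ne', le_div_iff₀ hc]
    linarith
  linarith

/-- **Monotonicity 1 (Lemma 2).** If `x` is an `(α,β)`-approximate minimizer of
`h(·) - ⟨σ,·⟩` over `X` and `x'` is an `(α,β)`-approximate minimizer of
`h(·) - ⟨σ + c eᵢ,·⟩` over `X`, then `x'ᵢ ≥ xᵢ - 2(α + β‖σ‖₁)/c - β`. -/
theorem ftpl_monotonicity_one {d : ℕ} (X : Set (Fin d → ℝ)) (h : (Fin d → ℝ) → ℝ)
    (α β : ℝ) (hα : 0 ≤ α) (hβ : 0 ≤ β)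
    (σ : Fin d → ℝ) (c : ℝ) (hc : 0 < c) (i : Fin d)
    (x x' : Fin d → ℝ) (hxX : x ∈ X) (hx'X : x' ∈ X)
    (hx : ∀ z ∈ X, h x - dotp σ x ≤ h z - dotp σ z + (α + β * l1 σ))
    (hx' : ∀ z ∈ X,
      h x' - dotp (σ + c • stdBasis i) x' ≤
        h z - dotp (σ + c • stdBasis i) z + (α + β * l1 (σ + c • stdBasis i))) :
    x' i ≥ x i - 2 * (α + β * l1 σ) / c - β :=
  ftpl_monotonicity_one_general X h α β hβ σ c hc i x x' hxX hx'X hx hx'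
end
end

section
/- Let d ≥ 1, L > 0, α, β ≥ 0, let X ⊆ ℝ^d, let h : X → ℝ be arbitrary and let f : X → ℝ be L-Lipschitz with respect to the ℓ1 norm. Let σ ∈ ℝ^d, i ∈ {1, …, d}, and σ' = σ + 100Ld·e_i. Suppose u(σ), u(σ') ∈ X are (α,β)-approximate minimizers over X of z ↦ h(z) − ⟨σ, z⟩ and z ↦ h(z) − ⟨σ', z⟩ respectively, and v(σ), v(σ') ∈ X are (α,β)-approximate minimizers over X of z ↦ h(z) + f(z) − ⟨σ, z⟩ and z ↦ h(z) + f(z) − ⟨σ', z⟩ respectively. If ‖u(σ) − v(σ)‖_1 ≤ 10d·|u_i(σ) − v_i(σ)|, then min(u_i(σ'), v_i(σ')) ≥ max(u_i(σ), v_i(σ)) − (1/10)|u_i(σ) − v_i(σ)| − 3(α + β‖σ‖_1)/(100Ld) − β. -/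
open MeasureTheory

noncomputable section

/-- **Monotonicity 2 (Lemma 3).** Second monotonicity property of FTPL predictions:
`u` plays the role of `x_t` (approximate perturbed leader for cumulative loss `h`) and
`v` the role of `x_{t+1}` (approximate perturbed leader for `h + f`), both for perturbations
`σ` and `σ' = σ + 100 L d eᵢ`. -/
theorem ftpl_monotonicity_two {d : ℕ} (hd : 1 ≤ d) (L : ℝ) (hL : 0 < L)
    (α β : ℝ) (hα : 0 ≤ α) (hβ : 0 ≤ β)
    (X : Set (Fin d → ℝ)) (h f : (Fin d → ℝ) → ℝ)
    (hf : ∀ x ∈ X, ∀ y ∈ X, |f x - f y| ≤ L * l1 (x - y))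
    (σ : Fin d → ℝ) (i : Fin d)
    (u u' v v' : Fin d → ℝ)
    (huX : u ∈ X) (hu'X : u' ∈ X) (hvX : v ∈ X) (hv'X : v' ∈ X)
    (hu : ∀ z ∈ X, h u - dotp σ u ≤ h z - dotp σ z + (α + β * l1 σ))
    (hu' : ∀ z ∈ X,
      h u' - dotp (σ + (100 * L * d) • stdBasis i) u' ≤
        h z - dotp (σ + (100 * L * d) • stdBasis i) z
          + (α + β * l1 (σ + (100 * L * d) • stdBasis i)))
    (hv : ∀ z ∈ X, h v + f v - dotp σ v ≤ h z + f z - dotp σ z + (α + β * l1 σ))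
    (hv' : ∀ z ∈ X,
      h v' + f v' - dotp (σ + (100 * L * d) • stdBasis i) v' ≤
        h z + f z - dotp (σ + (100 * L * d) • stdBasis i) z
          + (α + β * l1 (σ + (100 * L * d) • stdBasis i)))
    (hstab : l1 (u - v) ≤ 10 * d * |u i - v i|) :
    min (u' i) (v' i) ≥
      max (u i) (v i) - (1 / 10) * |u i - v i| - 3 * (α + β * l1 σ) / (100 * L * d) - β := by
  set c : ℝ := 100 * L * d with hcdef
  have hd1 : (1 : ℝ) ≤ (d : ℝ) := by exact_mod_cast hd
  have hdpos : (0 : ℝ) < (d : ℝ) := by linarith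
  have hc : 0 < c := by
    have : (0:ℝ) < 100 * L := by linarith
    exact mul_pos this hdpos
  -- dot product with the perturbed vector
  have hdot : ∀ z : Fin d → ℝ,
      dotp (σ + c • stdBasis i) z = dotp σ z + c * z i := by
    intro z
    simp only [dotp, stdBasis, Pi.add_apply, Pi.smul_apply, Pi.single_apply,
      smul_eq_mul, add_mul, Finset.sum_add_distrib, mul_ite, ite_mul, mul_one,
      mul_zero, zero_mul]
    rw [Finset.sum_ite_eq' Finset.univ i (fun j => c * z j)]
    simp
  -- l1 norms
  have hl1nonneg : ∀ x : Fin d → ℝ, 0 ≤ l1 x := fun x =>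
    Finset.sum_nonneg fun j _ => abs_nonneg _
  have hl1' : l1 (σ + c • stdBasis i) ≤ l1 σ + c := by
    have hb : ∀ j ∈ Finset.univ, |(σ + c • stdBasis i) j| ≤
        |σ j| + (if j = i then c else 0) := by
      intro j _
      simp only [Pi.add_apply, Pi.smul_apply, stdBasis, Pi.single_apply, smul_eq_mul]
      split
      · simpa [abs_of_nonneg hc.le] using abs_add_le (σ j) c
      · simp
    calc l1 (σ + c • stdBasis i) ≤ ∑ j, (|σ j| + (if j = i then c else 0)) :=
          Finset.sum_le_sum hb
      _ = l1 σ + c := by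
          rw [Finset.sum_add_distrib, Finset.sum_ite_eq' Finset.univ i (fun _ => c)]
          simp [l1]
  set A : ℝ := α + β * l1 σ with hAdef
  set A' : ℝ := α + β * l1 (σ + c • stdBasis i) with hA'def
  have hA0 : 0 ≤ A := by
    have := hl1nonneg σ
    have : 0 ≤ β * l1 σ := mul_nonneg hβ (hl1nonneg σ)
    simp only [hAdef]; linarith
  have hA' : A' ≤ A + β * c := by
    have : β * l1 (σ + c • stdBasis i) ≤ β * (l1 σ + c) :=
      mul_le_mul_of_nonneg_left hl1' hβ
    simp only [hAdef, hA'def]; linarith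
  -- Lipschitz + stability bound
  have habs0 : 0 ≤ |u i - v i| := abs_nonneg _
  have hfb : |f u - f v| ≤ c / 10 * |u i - v i| := by
    have h1 := hf u huX v hvX
    have h2 : L * l1 (u - v) ≤ L * (10 * d * |u i - v i|) :=
      mul_le_mul_of_nonneg_left hstab hL.le
    have : L * (10 * d * |u i - v i|) = c / 10 * |u i - v i| := by
      simp only [hcdef]; ring
    linarith [this ▸ h2]
  have hfb1 : f u - f v ≤ c / 10 * |u i - v i| := (abs_le.mp hfb).2
  have hfb2 : f v - f u ≤ c / 10 * |u i - v i| := by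
    have := (abs_le.mp hfb).1; linarith
  have hq : 0 ≤ c / 10 * |u i - v i| := by positivity
  -- the four key inequalities
  have I1 : c * u i - c * u' i ≤ A + A' := by
    have H1 := hu' u huX
    have H2 := hu u' hu'X
    rw [hdot, hdot] at H1
    linarith
  have I2 : c * v i - c * v' i ≤ A + A' := by
    have H1 := hv' v hvX
    have H2 := hv v' hv'X
    rw [hdot, hdot] at H1
    linarith
  have I3 : c * v i - c * u' i ≤ 2 * A + A' + c / 10 * |u i - v i| := by
    have H1 := hu' v hvX
    have H2 := hu u' hu'X
    have H3 := hv u huX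
    rw [hdot, hdot] at H1
    linarith
  have I4 : c * u i - c * v' i ≤ 2 * A + A' + c / 10 * |u i - v i| := by
    have H1 := hv' u huX
    have H2 := hv v' hv'X
    have H3 := hu v hvX
    rw [hdot, hdot] at H1
    linarith
  -- division step
  have key : ∀ x y : ℝ, c * x - c * y ≤ 3 * A + β * c + c / 10 * |u i - v i| →
      x - (1 / 10) * |u i - v i| - 3 * A / c - β ≤ y := by
    intro x y hxy
    have heq : c * ((1 / 10) * |u i - v i| + 3 * A / c + β)
        = 3 * A + β * c + c / 10 * |u i - v i| := by
      field_simp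
      ring
    have h2 : c * (x - y) ≤ c * ((1 / 10) * |u i - v i| + 3 * A / c + β) := by
      rw [heq]; linarith
    have := (mul_le_mul_iff_right₀ hc).mp h2
    linarith
  rw [ge_iff_le, le_min_iff]
  constructor
  · rcases le_total (u i) (v i) with hcase | hcase
    · rw [max_eq_right hcase]
      exact key _ _ (by linarith)
    · rw [max_eq_left hcase]
      exact key _ _ (by linarith)
  · rcases le_total (u i) (v i) with hcase | hcase
    · rw [max_eq_right hcase]
      exact key _ _ (by linarith)
    · rw [max_eq_left hcase]
      exact key _ _ (by linarith)
end
end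

section
/- Let X ⊆ ℝ^d, σ ∈ ℝ^d, γ ≥ 0, T ≥ 1, let f_1, …, f_T : X → ℝ and g_1, …, g_T : X → ℝ with g_1 = 0. Suppose x_1, …, x_T ∈ X are such that for each t, Σ_{i=1}^{t−1} f_i(x_t) + g_t(x_t) − ⟨σ, x_t⟩ ≤ inf_{x∈X} ( Σ_{i=1}^{t−1} f_i(x) + g_t(x) − ⟨σ, x⟩ ) + γ, and suppose x̄_2, …, x̄_{T+1} ∈ X are such that x̄_{t+1} exactly minimizes x ↦ Σ_{i=1}^{t} f_i(x) − ⟨σ, x⟩ over X. Then for every x* ∈ X, Σ_{t=1}^T ( g_t(x_t) − g_t(x̄_{t+1}) ) + Σ_{t=1}^T ( f_t(x̄_{t+1}) − f_t(x*) ) ≤ ⟨σ, x̄_2 − x*⟩ + γ(T − 1). -/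
/-!
Be-the-leader induction. With `F n = ∑_{i<n} f i - P`, the partial sums
`∑_{t<n} (g t (x t) - g t (xb (t+1)) + f t (xb (t+1)))` stay below
`F n (xb n) + P (xb 1) + γ (n - 1)`: going from `n` to `n + 1`, exact optimality of `xb n` for
`F n` replaces `xb n` by `x n`, and `γ`-optimality of `x n` for `F n + g n` replaces `x n` by
`xb (n + 1)`, which turns `F n + f n` into `F (n + 1)`. At `n = T`, optimality of `xb T` against
`xstar` concludes.
-/

open MeasureTheory

noncomputable section

lemma dotp_sub {d : ℕ} (σ x y : Fin d → ℝ) : dotp σ (x - y) = dotp σ x - dotp σ y := by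
  simp only [dotp, Pi.sub_apply, mul_sub, Finset.sum_sub_distrib]

section BeTheLeader

variable {α : Type*} {X : Set α} {P : α → ℝ} {γ : ℝ} {T : ℕ} {f g : ℕ → α → ℝ} {x xb : ℕ → α}

open Finset

theorem optimistic_be_the_leader_prefix (hg0 : g 0 = 0)
    (hxX : ∀ t < T, x t ∈ X)
    (hx : ∀ t < T, ∀ z ∈ X,
      (∑ i ∈ range t, f i (x t)) + g t (x t) - P (x t) ≤ (∑ i ∈ range t, f i z) + g t z - P z + γ)
    (hxbX : ∀ t < T, xb (t + 1) ∈ X)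
    (hxb : ∀ t < T, ∀ z ∈ X,
      (∑ i ∈ range (t + 1), f i (xb (t + 1))) - P (xb (t + 1)) ≤ (∑ i ∈ range (t + 1), f i z) - P z)
    {n : ℕ} (hn : n + 1 ≤ T) :
    ∑ t ∈ range (n + 1), (g t (x t) - g t (xb (t + 1)) + f t (xb (t + 1))) ≤
      (∑ i ∈ range (n + 1), f i (xb (n + 1))) - P (xb (n + 1)) + P (xb 1) + γ * n := by
  induction n with
  | zero => simp [hg0]
  | succ n ih =>
    have hprev := ih (by omega)
    have hleader := hxb n (by omega) (x (n + 1)) (hxX (n + 1) hn)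
    have happrox := hx (n + 1) hn (xb (n + 2)) (hxbX (n + 1) hn)
    rw [sum_range_succ, sum_range_succ (fun i => f i (xb (n + 2)))]
    push_cast
    linarith

theorem optimistic_be_the_leader (hT : 1 ≤ T) (hg0 : g 0 = 0)
    (hxX : ∀ t < T, x t ∈ X)
    (hx : ∀ t < T, ∀ z ∈ X,
      (∑ i ∈ range t, f i (x t)) + g t (x t) - P (x t) ≤ (∑ i ∈ range t, f i z) + g t z - P z + γ)
    (hxbX : ∀ t < T, xb (t + 1) ∈ X)
    (hxb : ∀ t < T, ∀ z ∈ X,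
      (∑ i ∈ range (t + 1), f i (xb (t + 1))) - P (xb (t + 1)) ≤ (∑ i ∈ range (t + 1), f i z) - P z)
    {u : α} (hu : u ∈ X) :
    (∑ t ∈ range T, (g t (x t) - g t (xb (t + 1)))) + (∑ t ∈ range T, (f t (xb (t + 1)) - f t u)) ≤
      P (xb 1) - P u + γ * ((T : ℝ) - 1) := by
  obtain ⟨n, rfl⟩ : ∃ n, T = n + 1 := ⟨T - 1, by omega⟩
  have hprefix := optimistic_be_the_leader_prefix hg0 hxX hx hxbX hxb le_rfl
  have hleader := hxb n n.lt_succ_self u hu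
  rw [sum_add_distrib] at hprefix
  simp only [sum_sub_distrib] at hprefix ⊢
  push_cast
  linarith

end BeTheLeader

/-- Rounds are indexed `0, …, T-1`, so the paper's `g_1 = 0` reads `g 0 = 0`. -/
theorem optimistic_perturbed_be_the_leader_general {d : ℕ} (X : Set (Fin d → ℝ)) (σ : Fin d → ℝ)
    (γ : ℝ) (T : ℕ) (hT : 1 ≤ T)
    (f g : ℕ → (Fin d → ℝ) → ℝ) (hg0 : g 0 = 0)
    (x xb : ℕ → Fin d → ℝ)
    (hxX : ∀ t < T, x t ∈ X)
    (hx : ∀ t < T, ∀ z ∈ X,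
      (∑ i ∈ Finset.range t, f i (x t)) + g t (x t) - dotp σ (x t) ≤
        (∑ i ∈ Finset.range t, f i z) + g t z - dotp σ z + γ)
    (hxbX : ∀ t < T, xb (t + 1) ∈ X)
    (hxb : ∀ t < T, ∀ z ∈ X,
      (∑ i ∈ Finset.range (t + 1), f i (xb (t + 1))) - dotp σ (xb (t + 1)) ≤
        (∑ i ∈ Finset.range (t + 1), f i z) - dotp σ z) :
    ∀ xstar ∈ X,
      (∑ t ∈ Finset.range T, (g t (x t) - g t (xb (t + 1)))) +
          (∑ t ∈ Finset.range T, (f t (xb (t + 1)) - f t xstar)) ≤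
        dotp σ (xb 1 - xstar) + γ * ((T : ℝ) - 1) := fun _ hstar => by
  rw [dotp_sub]
  exact optimistic_be_the_leader hT hg0 hxX hx hxbX hxb hstar

/-- **Optimistic perturbed be-the-leader inequality.** Rounds are indexed `0, …, T-1` and
`g 0 = 0`. For each round `t`, `x t` is a `γ`-approximate minimizer over `X` of
`∑_{i < t} f i (·) + g t (·) - ⟨σ,·⟩` (the guess-augmented perturbed cumulative loss), and
`xb (t+1)` exactly minimizes `∑_{i ≤ t} f i (·) - ⟨σ,·⟩` over `X`. -/
theorem optimistic_perturbed_be_the_leader {d : ℕ} (X : Set (Fin d → ℝ)) (σ : Fin d → ℝ)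
    (γ : ℝ) (hγ : 0 ≤ γ) (T : ℕ) (hT : 1 ≤ T)
    (f g : ℕ → (Fin d → ℝ) → ℝ) (hg0 : g 0 = 0)
    (x xb : ℕ → Fin d → ℝ)
    (hxX : ∀ t < T, x t ∈ X)
    (hx : ∀ t < T, ∀ z ∈ X,
      (∑ i ∈ Finset.range t, f i (x t)) + g t (x t) - dotp σ (x t) ≤
        (∑ i ∈ Finset.range t, f i z) + g t z - dotp σ z + γ)
    (hxbX : ∀ t < T, xb (t + 1) ∈ X)
    (hxb : ∀ t < T, ∀ z ∈ X,
      (∑ i ∈ Finset.range (t + 1), f i (xb (t + 1))) - dotp σ (xb (t + 1)) ≤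
        (∑ i ∈ Finset.range (t + 1), f i z) - dotp σ z) :
    ∀ xstar ∈ X,
      (∑ t ∈ Finset.range T, (g t (x t) - g t (xb (t + 1)))) +
          (∑ t ∈ Finset.range T, (f t (xb (t + 1)) - f t xstar)) ≤
        dotp σ (xb 1 - xstar) + γ * ((T : ℝ) - 1) :=
  optimistic_perturbed_be_the_leader_general X σ γ T hT f g hg0 x xb hxX hx hxbX hxb
end
end

section
/- Let D > 0, T ≥ 1, and for a ∈ [−D, D] define g_a : [−D, D] → ℝ by g_a(x) = max{0, D/2 − |x − a|}. Then for any points x_1, …, x_T ∈ [−D, D], inf_{x ∈ [−D,D]} Σ_{t=1}^T g_{x_t}(x) ≤ DT/4. -/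
/-!
The two endpoints `±D` are `2D` apart while each hat has support of width `D`, so every hat,
wherever it is centred, contributes at most `D/2` to `f (-D) + f D`, where `f` is the total loss. Hence
`f (-D) + f D ≤ DT/2`, and the smaller of the two values is at most `DT/4`.
-/

noncomputable section

def hatFn (D a x : ℝ) : ℝ := max 0 (D / 2 - |x - a|)

open Finset

lemma hatFn_nonneg (D a x : ℝ) : 0 ≤ hatFn D a x := le_max_left _ _

lemma hatFn_add_hatFn_le {D x y : ℝ} (hD : 0 ≤ D) (hxy : D / 2 ≤ |x - y|) (a : ℝ) :
    hatFn D a x + hatFn D a y ≤ D / 2 := by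
  have htri : |x - y| ≤ |x - a| + |y - a| := abs_sub_comm a y ▸ abs_sub_le x a y
  unfold hatFn
  rcases max_cases (0 : ℝ) (D / 2 - |x - a|) with ⟨hx, -⟩ | ⟨hx, -⟩ <;>
    rcases max_cases (0 : ℝ) (D / 2 - |y - a|) with ⟨hy, -⟩ | ⟨hy, -⟩ <;>
    rw [hx, hy] <;> linarith [abs_nonneg (x - a), abs_nonneg (y - a)]

lemma csInf_le_add_div_two {s : Set ℝ} (hs : BddBelow s) {u v : ℝ} (hu : u ∈ s) (hv : v ∈ s) :
    sInf s ≤ (u + v) / 2 := by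
  linarith [csInf_le hs hu, csInf_le hs hv]

theorem hat_losses_inf_le_general (D : ℝ) (hD : 0 < D) (T : ℕ)
    (xs : ℕ → ℝ) :
    sInf ((fun x => ∑ t ∈ Finset.range T, hatFn D (xs t) x) '' Set.Icc (-D) D) ≤
      D * T / 4 := by
  set f : ℝ → ℝ := fun x => ∑ t ∈ range T, hatFn D (xs t) x
  have hbdd : BddBelow (f '' Set.Icc (-D) D) :=
    ⟨0, by rintro _ ⟨x, -, rfl⟩; exact sum_nonneg fun t _ => hatFn_nonneg _ _ _⟩
  have hendpoints : f (-D) + f D ≤ T * (D / 2) := by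
    have hsep : D / 2 ≤ |-D - D| := by rw [abs_of_neg (by linarith)]; linarith
    calc f (-D) + f D = ∑ t ∈ range T, (hatFn D (xs t) (-D) + hatFn D (xs t) D) :=
          (sum_add_distrib).symm
      _ ≤ ∑ _t ∈ range T, D / 2 := sum_le_sum fun t _ => hatFn_add_hatFn_le hD.le hsep (xs t)
      _ = T * (D / 2) := by rw [sum_const, card_range, nsmul_eq_mul]
  calc sInf (f '' Set.Icc (-D) D) ≤ (f (-D) + f D) / 2 :=
        csInf_le_add_div_two hbdd (Set.mem_image_of_mem f ⟨le_rfl, by linarith⟩)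
          (Set.mem_image_of_mem f ⟨by linarith, le_rfl⟩)
    _ ≤ D * T / 4 := by linarith

/-- For any points `x_1, …, x_T ∈ [-D, D]`, the best fixed action in hindsight for the
losses `g_{x_t}` suffers total loss at most `DT/4`. -/
theorem hat_losses_inf_le (D : ℝ) (hD : 0 < D) (T : ℕ) (hT : 1 ≤ T)
    (xs : ℕ → ℝ) (hxs : ∀ t < T, xs t ∈ Set.Icc (-D) D) :
    sInf ((fun x => ∑ t ∈ Finset.range T, hatFn D (xs t) x) '' Set.Icc (-D) D) ≤
      D * T / 4 :=
  hat_losses_inf_le_general D hD T xs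
end
end
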